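/- arXiv:0910.0067 — 7 statements merged into one kernel-verified Lean document; each statement's English description precedes it below -/
import Mathlib

section
/- Let (Ω, F, P) be a probability space and let {A_n}_{n=1}^∞ be a sequence of events. Let {w_n}_{n=1}^∞ be a sequence of real numbers (possibly negative) such that lim_{m→∞} Σ_{n=1}^m w_n P(A_n) = ∞. Then P(limsup_n A_n) ≥ limsup_{n→∞} (Σ_{k=1}^n w_k P(A_k))² / (Σ_{i=1}^n Σ_{j=1}^n w_i w_j P(A_i ∩ A_j)). -/
open MeasureTheory Filter Finset Topology

/-!
Put `X n = ∑_{k ∈ [1, n]} w k · 1_{A k}`, so that the ratio is `(E X n)² / E (X n)²`. Fix `m` and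
`B = ⋃_{k ≥ m} A k`. Off `B` the function `X n` stops depending on `n` once `n ≥ m`, so
`E X n = E[X n; B] + c` with `c` constant, and Cauchy–Schwarz on `B` gives
`(E X n - c)² ≤ P(B) · E (X n)²`. As `E X n → ∞`, the limsup of the ratio is at most `P(B)`, and
`P(B) → P(limsup A)` as `m → ∞`.
-/

theorem limsup_sq_div_le_of_sub_sq_le {S Q : ℕ → ℝ} {c p : ℝ} (hp : 0 ≤ p)
    (hS : Tendsto S atTop atTop) (hSQ : ∀ᶠ n in atTop, (S n - c) ^ 2 ≤ p * Q n) :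
    limsup (fun n => S n ^ 2 / Q n) atTop ≤ p := by
  have hshift : Tendsto (fun n => S n - c) atTop atTop := by
    simpa only [sub_eq_add_neg] using tendsto_atTop_add_const_right atTop (-c) hS
  have hratio : Tendsto (fun n => p * (S n / (S n - c)) ^ 2) atTop (𝓝 p) := by
    have hone : Tendsto (fun n => 1 + c / (S n - c)) atTop (𝓝 1) := by
      simpa using ((tendsto_const_nhds (x := c)).div_atTop hshift).const_add 1
    have := (hone.pow 2).const_mul p
    rw [one_pow, mul_one] at this
    refine this.congr' ?_
    filter_upwards [hshift.eventually_gt_atTop 0] with n hn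
    rw [one_add_div hn.ne', sub_add_cancel]
  have hbound : ∀ᶠ n in atTop,
      0 ≤ S n ^ 2 / Q n ∧ S n ^ 2 / Q n ≤ p * (S n / (S n - c)) ^ 2 := by
    filter_upwards [hSQ, hshift.eventually_gt_atTop 0] with n hle hpos
    have hQ : 0 < Q n := by
      by_contra! hQ
      nlinarith [mul_nonpos_of_nonneg_of_nonpos hp hQ, pow_pos hpos 2]
    refine ⟨by positivity, ?_⟩
    rw [div_pow, mul_div_assoc', div_le_div_iff₀ hQ (pow_pos hpos 2)]
    nlinarith [mul_le_mul_of_nonneg_left hle (sq_nonneg (S n))]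
  calc limsup (fun n => S n ^ 2 / Q n) atTop
      ≤ limsup (fun n => p * (S n / (S n - c)) ^ 2) atTop :=
        limsup_le_limsup (hbound.mono fun n h => h.2)
          (isCoboundedUnder_le_of_eventually_le atTop (hbound.mono fun n h => h.1))
          hratio.isBoundedUnder_le
    _ = p := hratio.limsup_eq

section Integral

variable {Ω : Type*} [MeasurableSpace Ω] {μ : Measure Ω} [IsFiniteMeasure μ]

theorem sq_integral_le_measureReal_univ_mul_integral_sq {f : Ω → ℝ} (hf : MemLp f 2 μ) :
    (∫ ω, f ω ∂μ) ^ 2 ≤ μ.real Set.univ * ∫ ω, f ω ^ 2 ∂μ := by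
  have hf₁ : Integrable f μ := hf.integrable one_le_two
  have hquad : ∀ x : ℝ,
      0 ≤ μ.real Set.univ * (x * x) + (-2 * ∫ ω, f ω ∂μ) * x + ∫ ω, f ω ^ 2 ∂μ := by
    intro x
    have h : ∫ ω, (f ω - x) ^ 2 ∂μ
        = μ.real Set.univ * (x * x) + (-2 * ∫ ω, f ω ∂μ) * x + ∫ ω, f ω ^ 2 ∂μ := by
      simp only [sub_sq]
      have hlin : Integrable (fun ω => 2 * f ω * x) μ := (hf₁.const_mul 2).mul_const x
      have hdiff : Integrable (fun ω => f ω ^ 2 - 2 * f ω * x) μ := hf.integrable_sq.sub hlin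
      rw [integral_add hdiff (integrable_const _),
        integral_sub hf.integrable_sq hlin, integral_mul_const, integral_const_mul,
        integral_const, smul_eq_mul]
      ring
    exact h ▸ integral_nonneg fun ω => sq_nonneg _
  have := discrim_le_zero hquad
  rw [discrim] at this
  linarith

theorem limsup_sq_integral_div_integral_sq_le {X : ℕ → Ω → ℝ}
    (hX : ∀ n, MemLp (X n) 2 μ) {B : Set Ω} (hB : MeasurableSet B) {Y : Ω → ℝ}
    (hXY : ∀ᶠ n in atTop, Set.EqOn (X n) Y Bᶜ)
    (hdiv : Tendsto (fun n => ∫ ω, X n ω ∂μ) atTop atTop) :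
    limsup (fun n => (∫ ω, X n ω ∂μ) ^ 2 / ∫ ω, X n ω ^ 2 ∂μ) atTop ≤ μ.real B := by
  refine limsup_sq_div_le_of_sub_sq_le measureReal_nonneg hdiv (c := ∫ ω in Bᶜ, Y ω ∂μ) ?_
  filter_upwards [hXY] with n hn
  have hsplit : ∫ ω, X n ω ∂μ - ∫ ω in Bᶜ, Y ω ∂μ = ∫ ω in B, X n ω ∂μ := by
    rw [← setIntegral_congr_fun hB.compl hn,
      ← integral_add_compl hB ((hX n).integrable one_le_two), add_sub_cancel_right]
  calc (∫ ω, X n ω ∂μ - ∫ ω in Bᶜ, Y ω ∂μ) ^ 2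
      = (∫ ω in B, X n ω ∂μ) ^ 2 := by rw [hsplit]
    _ ≤ μ.real B * ∫ ω in B, X n ω ^ 2 ∂μ := by
      simpa only [measureReal_restrict_apply_univ] using
        sq_integral_le_measureReal_univ_mul_integral_sq ((hX n).restrict B)
    _ ≤ μ.real B * ∫ ω, X n ω ^ 2 ∂μ :=
      mul_le_mul_of_nonneg_left
        (setIntegral_le_integral (hX n).integrable_sq (ae_of_all _ fun ω => sq_nonneg _))
        measureReal_nonneg

theorem tendsto_measureReal_biUnion_ge_limsup {A : ℕ → Set Ω}
    (hA : ∀ n, MeasurableSet (A n)) :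
    Tendsto (fun m => μ.real (⋃ k ≥ m, A k)) atTop (𝓝 (μ.real (limsup A atTop))) := by
  have hanti : Antitone fun m => ⋃ k ≥ m, A k := fun i j hij =>
    Set.biUnion_subset_biUnion_left fun k hk => le_trans hij hk
  have hlimsup : limsup A atTop = ⋂ m, ⋃ k ≥ m, A k := by
    simp only [limsup_eq_iInf_iSup_of_nat, Set.iInf_eq_iInter, Set.iSup_eq_iUnion]
  rw [hlimsup]
  exact (ENNReal.tendsto_toReal (measure_ne_top μ _)).comp <| tendsto_measure_iInter_atTop
    (fun m => (MeasurableSet.biUnion (Set.to_countable _) fun k _ => hA k).nullMeasurableSet)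
    hanti ⟨0, measure_ne_top μ _⟩

end Integral

section WeightedCount

variable {Ω ι : Type*}

noncomputable def weightedCount (w : ι → ℝ) (A : ι → Set Ω) (s : Finset ι) (ω : Ω) : ℝ :=
  ∑ k ∈ s, w k * (A k).indicator 1 ω

variable (w : ι → ℝ) {A : ι → Set Ω} (s : Finset ι)

theorem weightedCount_eqOn_compl {t : Finset ι} {B : Set Ω} (hst : s ⊆ t)
    (hAB : ∀ k ∈ t, k ∉ s → A k ⊆ B) :
    Set.EqOn (weightedCount w A t) (weightedCount w A s) Bᶜ := by
  intro ω hω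
  refine (sum_subset hst fun k hkt hks => ?_).symm
  rw [Set.indicator_of_notMem fun h => hω (hAB k hkt hks h), mul_zero]

variable [MeasurableSpace Ω] {μ : Measure Ω} [IsFiniteMeasure μ]

theorem memLp_weightedCount (hA : ∀ k, MeasurableSet (A k)) (p : ENNReal) :
    MemLp (weightedCount w A s) p μ :=
  memLp_finsetSum s fun k _ =>
    (memLp_indicator_const p (hA k) 1 (Or.inr (measure_ne_top μ _))).const_mul (w k)

theorem integral_weightedCount (hA : ∀ k, MeasurableSet (A k)) :
    ∫ ω, weightedCount w A s ω ∂μ = ∑ k ∈ s, w k * μ.real (A k) := by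
  unfold weightedCount
  rw [integral_finsetSum s (f := fun k ω => w k * (A k).indicator 1 ω)
    fun k _ => ((integrable_const (1 : ℝ)).indicator (hA k)).const_mul (w k)]
  simp only [integral_const_mul, integral_indicator_one (hA _)]

theorem integral_weightedCount_sq (hA : ∀ k, MeasurableSet (A k)) :
    ∫ ω, weightedCount w A s ω ^ 2 ∂μ
      = ∑ i ∈ s, ∑ j ∈ s, w i * w j * μ.real (A i ∩ A j) := by
  have hexpand : ∀ ω, weightedCount w A s ω ^ 2
      = ∑ i ∈ s, ∑ j ∈ s, w i * w j * (A i ∩ A j).indicator 1 ω := by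
    intro ω
    simp only [weightedCount, sq, sum_mul_sum, Set.inter_indicator_one, Pi.mul_apply]
    exact sum_congr rfl fun i _ => sum_congr rfl fun j _ => by ring
  have hint : ∀ i j, Integrable (fun ω => w i * w j * (A i ∩ A j).indicator (1 : Ω → ℝ) ω) μ :=
    fun i j => ((integrable_const (1 : ℝ)).indicator ((hA i).inter (hA j))).const_mul _
  simp only [hexpand]
  rw [integral_finsetSum s fun i _ => integrable_finsetSum s fun j _ => hint i j]
  refine sum_congr rfl fun i _ => ?_
  rw [integral_finsetSum s fun j _ => hint i j]
  simp only [integral_const_mul, integral_indicator_one ((hA _).inter (hA _))]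

end WeightedCount

/-- **Weighted Erdős–Rényi / Borel–Cantelli generalization.**
If `∑_{n=1}^m w_n P(A_n) → ∞` for real weights `w_n` (possibly negative), then
`P(limsup A_n) ≥ limsup_n (∑_{k=1}^n w_k P(A_k))² / (∑_{i,j=1}^n w_i w_j P(A_i ∩ A_j))`. -/
theorem weighted_borel_cantelli
    {Ω : Type*} [MeasurableSpace Ω] (μ : Measure Ω) [IsProbabilityMeasure μ]
    (A : ℕ → Set Ω) (hA : ∀ n, MeasurableSet (A n)) (w : ℕ → ℝ)
    (hdiv : Tendsto (fun m => ∑ n ∈ Finset.Icc 1 m, w n * (μ (A n)).toReal)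
      atTop atTop) :
    (μ (limsup A atTop)).toReal ≥
      limsup (fun n =>
        (∑ k ∈ Finset.Icc 1 n, w k * (μ (A k)).toReal) ^ 2 /
          ∑ i ∈ Finset.Icc 1 n, ∑ j ∈ Finset.Icc 1 n,
            w i * w j * (μ (A i ∩ A j)).toReal) atTop := by
  simp only [← measureReal_def, ← integral_weightedCount w _ hA,
    ← integral_weightedCount_sq w _ hA] at hdiv ⊢
  refine ge_of_tendsto (tendsto_measureReal_biUnion_ge_limsup hA) (.of_forall fun m => ?_)
  refine limsup_sq_integral_div_integral_sq_le (fun n => memLp_weightedCount w _ hA 2)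
    (.biUnion (Set.to_countable _) fun k _ => hA k) (Y := weightedCount w A (Icc 1 m)) ?_ hdiv
  filter_upwards [eventually_ge_atTop m] with n hn
  exact weightedCount_eqOn_compl w _ (Icc_subset_Icc_right hn) fun k hkn hkm =>
    Set.subset_biUnion_of_mem (u := A) (show m ≤ k by simp only [mem_Icc] at hkn hkm; omega)
end

section
/- Let (Ω, F, P) be a probability space and let {A_n}_{n=1}^∞ be a sequence of events with P(A_n) > 0 for every n ∈ ℕ. Then P(limsup_n A_n) ≥ limsup_{n→∞} n² / (Σ_{i=1}^n Σ_{j=1}^n P(A_i ∩ A_j) / (P(A_i) P(A_j))). -/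
/-!
For a finite set `s` of indices put `g = ∑_{k ∈ s} 1_{A_k} / P(A_k)`. Then `∫ g = #s`,
`∫ g² = ∑_{i,j ∈ s} P(A_i ∩ A_j) / (P(A_i) P(A_j))`, and `g` vanishes off `⋃_{k ∈ s} A_k`, so
Cauchy–Schwarz gives `(#s)² ≤ (∑_{i,j ∈ s} …) · P(⋃_{k ∈ s} A_k)`. Taking `s = [m, n]`, whose double
sum is at most the one over `[1, n]`, and using `(n + 1 - m) / n → 1`, the limsup is at most
`P(⋃_{k ≥ m} A_k)` for every `m ≥ 1`; these tails decrease to `P(limsup A_n)`.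
-/

open MeasureTheory Filter Finset
open scoped ENNReal Topology

section

variable {Ω ι : Type*} [MeasurableSpace Ω] {μ : Measure Ω}

theorem sq_lintegral_le_lintegral_sq_mul_measure {g : Ω → ℝ≥0∞} {U : Set Ω}
    (hg : AEMeasurable g μ) (hgU : Function.support g ⊆ U) :
    (∫⁻ ω, g ω ∂μ) ^ 2 ≤ (∫⁻ ω, g ω ^ 2 ∂μ) * μ U := by
  have holder := ENNReal.lintegral_mul_le_Lp_mul_Lq (μ.restrict U) Real.HolderConjugate.two_two
    hg.restrict aemeasurable_const (g := 1)
  simp only [Pi.mul_apply, Pi.one_apply, mul_one, one_pow, one_mul, lintegral_const,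
    Measure.restrict_apply_univ, ENNReal.rpow_two] at holder
  rw [setLIntegral_eq_of_support_subset hgU,
    setLIntegral_eq_of_support_subset (by simpa using hgU)] at holder
  calc (∫⁻ ω, g ω ∂μ) ^ 2 ≤ ((∫⁻ ω, g ω ^ 2 ∂μ) ^ (1 / 2 : ℝ) * μ U ^ (1 / 2 : ℝ)) ^ 2 := by
        gcongr
    _ = (∫⁻ ω, g ω ^ 2 ∂μ) * μ U := by
      rw [mul_pow, ← ENNReal.rpow_mul_natCast, ← ENNReal.rpow_mul_natCast]; norm_num

theorem lintegral_sq_sum_indicator_const {A : ι → Set Ω} {s : Finset ι}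
    (hA : ∀ k ∈ s, MeasurableSet (A k)) (c : ι → ℝ≥0∞) :
    ∫⁻ ω, (∑ k ∈ s, (A k).indicator (fun _ => c k) ω) ^ 2 ∂μ =
      ∑ i ∈ s, ∑ j ∈ s, c i * c j * μ (A i ∩ A j) := by
  have hAA : ∀ i ∈ s, ∀ j ∈ s, MeasurableSet (A i ∩ A j) := fun i hi j hj =>
    (hA i hi).inter (hA j hj)
  simp_rw [sq, Finset.sum_mul_sum, ← Set.inter_indicator_mul]
  rw [lintegral_finsetSum' s fun i hi => Finset.aemeasurable_fun_sum s fun j hj =>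
    aemeasurable_const.indicator (hAA i hi j hj)]
  refine Finset.sum_congr rfl fun i hi => ?_
  rw [lintegral_finsetSum' s fun j hj => aemeasurable_const.indicator (hAA i hi j hj)]
  exact Finset.sum_congr rfl fun j hj => lintegral_indicator_const (hAA i hi j hj) _

variable (μ) in
noncomputable def correlationSum (A : ι → Set Ω) (s : Finset ι) : ℝ :=
  ∑ i ∈ s, ∑ j ∈ s, (μ (A i ∩ A j)).toReal / ((μ (A i)).toReal * (μ (A j)).toReal)

theorem correlationSum_nonneg (A : ι → Set Ω) (s : Finset ι) : 0 ≤ correlationSum μ A s :=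
  Finset.sum_nonneg fun _ _ => Finset.sum_nonneg fun _ _ => by positivity

theorem correlationSum_mono (A : ι → Set Ω) {s t : Finset ι} (hst : s ⊆ t) :
    correlationSum μ A s ≤ correlationSum μ A t :=
  (Finset.sum_le_sum fun _ _ => Finset.sum_le_sum_of_subset_of_nonneg hst fun _ _ _ => by
      positivity).trans
    (Finset.sum_le_sum_of_subset_of_nonneg hst fun _ _ _ =>
      Finset.sum_nonneg fun _ _ => by positivity)

theorem card_sq_le_correlationSum_mul_measure_biUnion [IsFiniteMeasure μ] {A : ι → Set Ω}
    {s : Finset ι} (hA : ∀ k ∈ s, MeasurableSet (A k)) (hA₀ : ∀ k ∈ s, μ (A k) ≠ 0) :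
    (#s : ℝ) ^ 2 ≤ correlationSum μ A s * (μ (⋃ k ∈ s, A k)).toReal := by
  set g : Ω → ℝ≥0∞ := fun ω => ∑ k ∈ s, (A k).indicator (fun _ => (μ (A k))⁻¹) ω
  have hg_meas : AEMeasurable g μ :=
    Finset.aemeasurable_fun_sum s fun k hk => aemeasurable_const.indicator (hA k hk)
  have hg_supp : Function.support g ⊆ ⋃ k ∈ s, A k := by
    intro ω hω
    obtain ⟨k, hk, hωk⟩ := Finset.exists_ne_zero_of_sum_ne_zero hω
    exact Set.mem_biUnion hk (Set.mem_of_indicator_ne_zero hωk)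
  have hg_int : ∫⁻ ω, g ω ∂μ = #s := by
    rw [lintegral_finsetSum' s fun k hk => aemeasurable_const.indicator (hA k hk),
      Finset.card_eq_sum_ones, Nat.cast_sum, Nat.cast_one]
    refine Finset.sum_congr rfl fun k hk => ?_
    rw [lintegral_indicator_const (hA k hk),
      ENNReal.inv_mul_cancel (hA₀ k hk) (measure_ne_top _ _)]
  have hterm_ne_top : ∀ i ∈ s, ∀ j ∈ s, (μ (A i))⁻¹ * (μ (A j))⁻¹ * μ (A i ∩ A j) ≠ ∞ :=
    fun i hi j hj => ENNReal.mul_ne_top (ENNReal.mul_ne_top (ENNReal.inv_ne_top.2 (hA₀ i hi))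
      (ENNReal.inv_ne_top.2 (hA₀ j hj))) (measure_ne_top _ _)
  have hg_sq_ne_top : ∫⁻ ω, g ω ^ 2 ∂μ ≠ ∞ := by
    rw [lintegral_sq_sum_indicator_const hA]
    exact ENNReal.sum_ne_top.2 fun i hi => ENNReal.sum_ne_top.2 fun j hj => hterm_ne_top i hi j hj
  have hg_sq_int : (∫⁻ ω, g ω ^ 2 ∂μ).toReal = correlationSum μ A s := by
    rw [lintegral_sq_sum_indicator_const hA, ENNReal.toReal_sum fun i hi =>
      ENNReal.sum_ne_top.2 fun j hj => hterm_ne_top i hi j hj]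
    refine Finset.sum_congr rfl fun i hi => ?_
    rw [ENNReal.toReal_sum fun j hj => hterm_ne_top i hi j hj]
    refine Finset.sum_congr rfl fun j _ => ?_
    rw [ENNReal.toReal_mul, ENNReal.toReal_mul, ENNReal.toReal_inv, ENNReal.toReal_inv,
      div_eq_mul_inv, mul_inv]
    ring
  have key := ENNReal.toReal_mono (ENNReal.mul_ne_top hg_sq_ne_top (measure_ne_top _ _))
    (sq_lintegral_le_lintegral_sq_mul_measure hg_meas hg_supp)
  rwa [hg_int, ENNReal.toReal_mul, hg_sq_int, ENNReal.toReal_pow, ENNReal.toReal_natCast] at key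

theorem sq_div_correlationSum_Icc_le [IsFiniteMeasure μ] {A : ℕ → Set Ω}
    (hA : ∀ k, MeasurableSet (A k)) (hA₀ : ∀ k, μ (A k) ≠ 0) {m n : ℕ} (hm : 1 ≤ m)
    (hmn : m ≤ n) :
    (n : ℝ) ^ 2 / correlationSum μ A (Icc 1 n) ≤
      ((n : ℝ) / (n + (1 - m))) ^ 2 * (μ (⋃ k ≥ m, A k)).toReal := by
  have hcard : (#(Icc m n) : ℝ) = n + (1 - m) := by
    rw [Nat.card_Icc, Nat.cast_sub (by omega)]; push_cast; ring
  have hcard_pos : (0 : ℝ) < n + (1 - m) := by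
    rw [← hcard]; exact_mod_cast Finset.card_pos.2 (Finset.nonempty_Icc.2 hmn)
  have hblock := card_sq_le_correlationSum_mul_measure_biUnion (μ := μ) (s := Icc m n)
    (fun k _ => hA k) (fun k _ => hA₀ k)
  have hcorr : correlationSum μ A (Icc m n) ≤ correlationSum μ A (Icc 1 n) :=
    correlationSum_mono A (Finset.Icc_subset_Icc_left hm)
  have htail : (μ (⋃ k ∈ Icc m n, A k)).toReal ≤ (μ (⋃ k ≥ m, A k)).toReal :=
    ENNReal.toReal_mono (measure_ne_top _ _) (measure_mono (Set.biUnion_subset_biUnion_left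
      fun k hk => (Finset.mem_Icc.1 hk).1))
  rw [hcard] at hblock
  refine div_le_of_le_mul₀ (correlationSum_nonneg A _) (by positivity) ?_
  calc (n : ℝ) ^ 2 = ((n : ℝ) / (n + (1 - m))) ^ 2 * (n + (1 - m)) ^ 2 := by
        field_simp
    _ ≤ ((n : ℝ) / (n + (1 - m))) ^ 2 * (correlationSum μ A (Icc 1 n) *
          (μ (⋃ k ≥ m, A k)).toReal) := by
        gcongr
        exact hblock.trans
          (mul_le_mul hcorr htail ENNReal.toReal_nonneg (correlationSum_nonneg A _))
    _ = _ := by ring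

end

/-- If `P(A_n) > 0` for all `n`, then
`P(limsup A_n) ≥ limsup_n n² / (∑_{i,j=1}^n P(A_i ∩ A_j) / (P(A_i) P(A_j)))`. -/
theorem borel_cantelli_reciprocal_weights
    {Ω : Type*} [MeasurableSpace Ω] (μ : Measure Ω) [IsProbabilityMeasure μ]
    (A : ℕ → Set Ω) (hA : ∀ n, MeasurableSet (A n))
    (hpos : ∀ n, 0 < (μ (A n)).toReal) :
    (μ (limsup A atTop)).toReal ≥
      limsup (fun n : ℕ =>
        (n : ℝ) ^ 2 /
          ∑ i ∈ Finset.Icc (1 : ℕ) n, ∑ j ∈ Finset.Icc (1 : ℕ) n,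
            (μ (A i ∩ A j)).toReal / ((μ (A i)).toReal * (μ (A j)).toReal)) atTop := by
  have hA₀ : ∀ n, μ (A n) ≠ 0 := fun n => (ENNReal.toReal_pos_iff.1 (hpos n)).1.ne'
  have hlimsup_le_tail : ∀ m ≥ 1,
      limsup (fun n : ℕ => (n : ℝ) ^ 2 / correlationSum μ A (Icc 1 n)) atTop ≤
        (μ (⋃ k ≥ m, A k)).toReal := by
    intro m hm
    have hlim : Tendsto (fun n : ℕ => ((n : ℝ) / (n + (1 - m))) ^ 2 * (μ (⋃ k ≥ m, A k)).toReal)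
        atTop (𝓝 (μ (⋃ k ≥ m, A k)).toReal) := by
      simpa using ((tendsto_natCast_div_add_atTop (1 - m : ℝ)).pow 2).mul_const _
    refine (limsup_le_limsup ((eventually_ge_atTop m).mono fun n hmn =>
      sq_div_correlationSum_Icc_le hA hA₀ hm hmn) (isCoboundedUnder_le_of_le atTop fun n =>
        div_nonneg (sq_nonneg _) (correlationSum_nonneg A _)) hlim.isBoundedUnder_le).trans_eq
      hlim.limsup_eq
  have htails : Tendsto (fun m => (μ (⋃ k ≥ m, A k)).toReal) atTop
      (𝓝 (μ (limsup A atTop)).toReal) := by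
    rw [limsup_eq_iInf_iSup_of_nat]
    refine (ENNReal.tendsto_toReal (measure_ne_top _ _)).comp (tendsto_measure_iInter_atTop
      (fun m => (MeasurableSet.biUnion (Set.to_countable _) fun k _ => hA k).nullMeasurableSet)
      (fun m m' hmm' => Set.biUnion_subset_biUnion_left fun k hk => le_trans hmm' hk)
      ⟨0, measure_ne_top _ _⟩)
  exact ge_of_tendsto htails ((eventually_ge_atTop 1).mono hlimsup_le_tail)
end

section
/- Let (Ω, F, P) be a probability space, let A_1, ..., A_n be events, and let w_1, ..., w_n be real numbers. Then (Σ_{i=1}^n w_i P(A_i))² ≤ P(⋃_{i=1}^n A_i) · (Σ_{i=1}^n Σ_{j=1}^n w_i w_j P(A_i ∩ A_j)). (This is a weighted version of the Chung–Erdős inequality.) -/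
/-!
Put `g := ∑ᵢ wᵢ 𝟙_{Aᵢ}` and `U := ⋃ᵢ Aᵢ`. Then `∫ g = ∑ᵢ wᵢ P(Aᵢ)` and
`∫ g² = ∑ᵢ ∑ⱼ wᵢ wⱼ P(Aᵢ ∩ Aⱼ)`, and since `g` vanishes off `U` we have `g = 𝟙_U · g`,
so Cauchy–Schwarz in `L²` gives `(∫ g)² ≤ (∫ 𝟙_U²) (∫ g²) = P(U) ∫ g²`.
-/

open MeasureTheory Finset

theorem Set.sum_indicator_const_sq {Ω ι : Type*} (A : ι → Set Ω) (w : ι → ℝ) (s : Finset ι)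
    (x : Ω) :
    (∑ i ∈ s, (A i).indicator (fun _ => w i) x) ^ 2 =
      ∑ i ∈ s, ∑ j ∈ s, (A i ∩ A j).indicator (fun _ => w i * w j) x := by
  simp only [sq, sum_mul_sum, Set.inter_indicator_mul]

theorem Set.sum_indicator_const_eq_zero_of_notMem_biUnion {Ω ι : Type*} {A : ι → Set Ω}
    (w : ι → ℝ) {s : Finset ι} {x : Ω} (hx : x ∉ ⋃ i ∈ s, A i) :
    ∑ i ∈ s, (A i).indicator (fun _ => w i) x = 0 :=
  sum_eq_zero fun _ hi => Set.indicator_of_notMem (fun hxi => hx (Set.mem_biUnion hi hxi)) _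

namespace MeasureTheory

variable {Ω ι : Type*} [MeasurableSpace Ω] {μ : Measure Ω}

theorem sq_integral_mul_le_integral_sq_mul_integral_sq {f g : Ω → ℝ}
    (hf : MemLp f 2 μ) (hg : MemLp g 2 μ) :
    (∫ x, f x * g x ∂μ) ^ 2 ≤ (∫ x, f x ^ 2 ∂μ) * ∫ x, g x ^ 2 ∂μ := by
  have integral_mul_eq_inner {u v : Ω → ℝ} (hu : MemLp u 2 μ) (hv : MemLp v 2 μ) :
      ∫ x, u x * v x ∂μ = inner ℝ (hu.toLp u) (hv.toLp v) := by
    rw [L2.inner_def]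
    refine integral_congr_ae ?_
    filter_upwards [hu.coeFn_toLp, hv.coeFn_toLp] with x hux hvx
    simp [hux, hvx, mul_comm]
  simp only [sq, integral_mul_eq_inner hf hg, integral_mul_eq_inner hf hf,
    integral_mul_eq_inner hg hg]
  exact real_inner_mul_inner_self_le _ _

theorem sq_integral_le_measureReal_mul_integral_sq {g : Ω → ℝ} {s : Set Ω}
    (hs : MeasurableSet s) (hμs : μ s ≠ ⊤) (hg : MemLp g 2 μ) (hgs : ∀ x ∉ s, g x = 0) :
    (∫ x, g x ∂μ) ^ 2 ≤ μ.real s * ∫ x, g x ^ 2 ∂μ := by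
  have hg_eq : ∀ x, s.indicator (fun _ => (1 : ℝ)) x * g x = g x := fun x => by
    by_cases hx : x ∈ s <;> simp [hx, hgs]
  have h1s_sq : ∀ x, s.indicator (fun _ => (1 : ℝ)) x ^ 2 = s.indicator (fun _ => 1) x :=
    fun x => by by_cases hx : x ∈ s <;> simp [hx]
  have h := sq_integral_mul_le_integral_sq_mul_integral_sq
    (memLp_indicator_const 2 hs (1 : ℝ) (Or.inr hμs)) hg
  simp only [hg_eq, h1s_sq] at h
  simpa [integral_indicator_const _ hs] using h

theorem integral_sum_indicator_const [IsFiniteMeasure μ] {A : ι → Set Ω}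
    (hA : ∀ i, MeasurableSet (A i)) (w : ι → ℝ) (s : Finset ι) :
    ∫ x, ∑ i ∈ s, (A i).indicator (fun _ => w i) x ∂μ = ∑ i ∈ s, w i * μ.real (A i) := by
  rw [integral_finsetSum _ fun i _ => (integrable_const (w i)).indicator (hA i)]
  simp [integral_indicator_const _ (hA _), mul_comm]

theorem memLp_sum_indicator_const [IsFiniteMeasure μ] (p : ENNReal) {A : ι → Set Ω}
    (hA : ∀ i, MeasurableSet (A i)) (w : ι → ℝ) (s : Finset ι) :
    MemLp (fun x => ∑ i ∈ s, (A i).indicator (fun _ => w i) x) p μ :=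
  memLp_finsetSum _ fun i _ => memLp_indicator_const p (hA i) (w i) (Or.inr (measure_ne_top μ _))

theorem integral_sum_indicator_const_sq [IsFiniteMeasure μ] {A : ι → Set Ω}
    (hA : ∀ i, MeasurableSet (A i)) (w : ι → ℝ) (s : Finset ι) :
    ∫ x, (∑ i ∈ s, (A i).indicator (fun _ => w i) x) ^ 2 ∂μ =
      ∑ i ∈ s, ∑ j ∈ s, w i * w j * μ.real (A i ∩ A j) := by
  have hA_inter (i : ι) : ∀ j, MeasurableSet (A i ∩ A j) := fun j => (hA i).inter (hA j)
  simp only [Set.sum_indicator_const_sq]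
  rw [integral_finsetSum _ fun i _ =>
    (memLp_sum_indicator_const 1 (hA_inter i) _ _).integrable le_rfl]
  simp only [integral_sum_indicator_const (hA_inter _)]

end MeasureTheory

/-- **Weighted Chung–Erdős inequality.**
`(∑_{i=1}^n w_i P(A_i))² ≤ P(⋃_{i=1}^n A_i) · ∑_{i,j=1}^n w_i w_j P(A_i ∩ A_j)`. -/
theorem weighted_chung_erdos
    {Ω : Type*} [MeasurableSpace Ω] (μ : Measure Ω) [IsProbabilityMeasure μ]
    (n : ℕ) (A : ℕ → Set Ω) (hA : ∀ i, MeasurableSet (A i)) (w : ℕ → ℝ) :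
    (∑ i ∈ Finset.Icc 1 n, w i * (μ (A i)).toReal) ^ 2 ≤
      (μ (⋃ i ∈ Finset.Icc 1 n, A i)).toReal *
        ∑ i ∈ Finset.Icc 1 n, ∑ j ∈ Finset.Icc 1 n,
          w i * w j * (μ (A i ∩ A j)).toReal := by
  have h := sq_integral_le_measureReal_mul_integral_sq (μ := μ)
    (Finset.measurableSet_biUnion _ fun i _ => hA i) (measure_ne_top μ _)
    (memLp_sum_indicator_const 2 hA w (Icc 1 n))
    (fun _ hx => Set.sum_indicator_const_eq_zero_of_notMem_biUnion w hx)
  rwa [integral_sum_indicator_const hA, integral_sum_indicator_const_sq hA] at h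
end

section
/- Let (Ω, F, P) be a probability space, let {A_n}_{n=1}^∞ be a sequence of events, and let {w_n}_{n=1}^∞ be real numbers such that lim_{m→∞} Σ_{n=1}^m w_n P(A_n) = ∞. Then for every s ∈ ℕ, limsup_{n→∞} (Σ_{k=1}^n w_k P(A_k))² / (Σ_{i=1}^n Σ_{j=1}^n w_i w_j P(A_i ∩ A_j)) = limsup_{n→∞} (Σ_{k=s}^n w_k P(A_k))² / (Σ_{i=s}^n Σ_{j=s}^n w_i w_j P(A_i ∩ A_j)). -/
open MeasureTheory Filter Finset Topology Asymptotics

/-!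
Write `S_F = ∑_{i ∈ F} w_i 1_{A_i}`; the ratio over an index set `F` is `(E S_F)² / E S_F²`.
For `n ≥ s - 1`, `S_{[1,n]} = Y + X_n` with `Y = S_{[1,s-1]}` fixed and `X_n = S_{[s,n]}`.
Since `E X_n → ∞` and `E X_n² ≥ (E X_n)²`, the constant `E Y` is negligible against `E X_n`,
and by Cauchy–Schwarz `(E[Y X_n])² ≤ E Y² · E X_n²`, so `E[Y X_n]` and `E Y²` are negligible
against `E X_n²`. The two ratios are therefore asymptotically equivalent; both lie in `[0, 1]`,
so their difference tends to `0` and their limsups agree.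
-/

theorem limsup_eq_of_tendsto_sub {ι α : Type*} [AddCommGroup α]
    [ConditionallyCompleteLinearOrder α] [DenselyOrdered α] [AddLeftMono α]
    [TopologicalSpace α] [OrderTopology α] {l : Filter ι} [l.NeBot] {u v : ι → α}
    (hu : IsBoundedUnder (· ≤ ·) l u) (hu' : IsBoundedUnder (· ≥ ·) l u)
    (h : Tendsto (v - u) l (𝓝 0)) : limsup v l = limsup u l := by
  rw [show v = u + (v - u) by abel]
  refine le_antisymm ?_ ?_
  · simpa [h.limsup_eq] using limsup_add_le hu' hu h.isCoboundedUnder_le h.isBoundedUnder_le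
  · simpa [h.liminf_eq] using
      le_limsup_add hu hu'.isCoboundedUnder_flip h.isBoundedUnder_le h.isBoundedUnder_ge

theorem isLittleO_const_of_tendsto_atTop {ι : Type*} {l : Filter ι} {u : ι → ℝ}
    (hu : Tendsto u l atTop) (c : ℝ) : (fun _ => c) =o[l] u :=
  isLittleO_const_left.2 <| Or.inr <| tendsto_norm_atTop_atTop.comp hu

theorem isLittleO_of_sq_le_mul {ι : Type*} {l : Filter ι} {r q : ι → ℝ} {d : ℝ}
    (hq : Tendsto q l atTop) (h : ∀ᶠ i in l, r i ^ 2 ≤ d * q i) : r =o[l] q := by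
  refine isLittleO_iff.2 fun ε hε => ?_
  filter_upwards [h, hq.eventually_ge_atTop (d / ε ^ 2), hq.eventually_ge_atTop 0]
    with i hr hdq hq0
  rw [Real.norm_eq_abs, Real.norm_eq_abs, ← abs_of_pos hε, ← abs_mul, ← sq_le_sq]
  have hd : d ≤ q i * ε ^ 2 := (div_le_iff₀ (by positivity)).1 hdq
  nlinarith

section Moments

variable {Ω : Type*} [MeasurableSpace Ω] {μ : Measure Ω}

theorem integral_add_sq {f g : Ω → ℝ} (hf : MemLp f 2 μ) (hg : MemLp g 2 μ) :
    ∫ ω, (f ω + g ω) ^ 2 ∂μ =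
      ∫ ω, f ω ^ 2 ∂μ + 2 * ∫ ω, f ω * g ω ∂μ + ∫ ω, g ω ^ 2 ∂μ := by
  have hfg : Integrable (fun ω => f ω * g ω) μ := hf.integrable_mul hg
  have hexpand : ∀ ω, (f ω + g ω) ^ 2 = f ω ^ 2 + 2 * (f ω * g ω) + g ω ^ 2 := fun ω => by
    ring
  simp_rw [hexpand]
  rw [integral_add (f := fun ω => f ω ^ 2 + 2 * (f ω * g ω))
      (hf.integrable_sq.add (hfg.const_mul 2)) hg.integrable_sq,
    integral_add hf.integrable_sq (hfg.const_mul 2), integral_const_mul]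

theorem sq_integral_mul_le {f g : Ω → ℝ} (hf : MemLp f 2 μ) (hg : MemLp g 2 μ) :
    (∫ ω, f ω * g ω ∂μ) ^ 2 ≤ (∫ ω, f ω ^ 2 ∂μ) * ∫ ω, g ω ^ 2 ∂μ := by
  have hquad : ∀ t : ℝ, 0 ≤ (∫ ω, f ω ^ 2 ∂μ) * (t * t) + 2 * (∫ ω, f ω * g ω ∂μ) * t
      + ∫ ω, g ω ^ 2 ∂μ := fun t => by
    have hexpand := integral_add_sq (hf.const_mul t) hg
    simp only [mul_pow, mul_assoc, integral_const_mul] at hexpand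
    have hnonneg : 0 ≤ ∫ ω, (t * f ω + g ω) ^ 2 ∂μ := integral_nonneg fun ω => sq_nonneg _
    linarith
  have hdisc := discrim_le_zero hquad
  rw [discrim] at hdisc
  nlinarith

theorem sq_integral_le_integral_sq [IsProbabilityMeasure μ] {f : Ω → ℝ} (hf : MemLp f 2 μ) :
    (∫ ω, f ω ∂μ) ^ 2 ≤ ∫ ω, f ω ^ 2 ∂μ := by
  have hvar := ProbabilityTheory.variance_eq_sub hf ▸ ProbabilityTheory.variance_nonneg f μ
  simpa using hvar

noncomputable def momentRatio (μ : Measure Ω) (X : Ω → ℝ) : ℝ :=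
  (∫ ω, X ω ∂μ) ^ 2 / ∫ ω, X ω ^ 2 ∂μ

theorem momentRatio_nonneg (μ : Measure Ω) (X : Ω → ℝ) : 0 ≤ momentRatio μ X :=
  div_nonneg (sq_nonneg _) (integral_nonneg fun _ => sq_nonneg _)

theorem momentRatio_le_one [IsProbabilityMeasure μ] {X : Ω → ℝ} (hX : MemLp X 2 μ) :
    momentRatio μ X ≤ 1 :=
  div_le_one_of_le₀ (sq_integral_le_integral_sq hX) (integral_nonneg fun _ => sq_nonneg _)

theorem tendsto_momentRatio_add_sub_momentRatio [IsProbabilityMeasure μ] {ι : Type*}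
    {l : Filter ι} {Y : Ω → ℝ} {X : ι → Ω → ℝ} (hY : MemLp Y 2 μ) (hX : ∀ i, MemLp (X i) 2 μ)
    (hmean : Tendsto (fun i => ∫ ω, X i ω ∂μ) l atTop) :
    Tendsto (fun i => momentRatio μ (Y + X i) - momentRatio μ (X i)) l (𝓝 0) := by
  have hsecond : Tendsto (fun i => ∫ ω, X i ω ^ 2 ∂μ) l atTop :=
    tendsto_atTop_mono (fun i => sq_integral_le_integral_sq (hX i))
      ((tendsto_pow_atTop two_ne_zero).comp hmean)
  have hnum : (fun i => ∫ ω, (Y + X i) ω ∂μ) ~[l] fun i => ∫ ω, X i ω ∂μ := by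
    have hsplit : (fun i => ∫ ω, (Y + X i) ω ∂μ) =
        (fun i => ∫ ω, X i ω ∂μ) + fun _ => ∫ ω, Y ω ∂μ := funext fun i =>
      (integral_add (hY.integrable one_le_two) ((hX i).integrable one_le_two)).trans
        (add_comm _ _)
    rw [hsplit]
    exact IsEquivalent.refl.add_isLittleO (isLittleO_const_of_tendsto_atTop hmean _)
  have hden : (fun i => ∫ ω, (Y + X i) ω ^ 2 ∂μ) ~[l] fun i => ∫ ω, X i ω ^ 2 ∂μ := by
    have hsplit : (fun i => ∫ ω, (Y + X i) ω ^ 2 ∂μ) = (fun i => ∫ ω, X i ω ^ 2 ∂μ) +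
        fun i => 2 * ∫ ω, Y ω * X i ω ∂μ + ∫ ω, Y ω ^ 2 ∂μ := by
      ext i
      simp only [Pi.add_apply, integral_add_sq hY (hX i)]
      ring
    have hcross : (fun i => ∫ ω, Y ω * X i ω ∂μ) =o[l] fun i => ∫ ω, X i ω ^ 2 ∂μ :=
      isLittleO_of_sq_le_mul hsecond (Eventually.of_forall fun i => sq_integral_mul_le hY (hX i))
    rw [hsplit]
    exact IsEquivalent.refl.add_isLittleO
      ((hcross.const_mul_left 2).add (isLittleO_const_of_tendsto_atTop hsecond _))
  have hbdd : (fun i => momentRatio μ (X i)) =O[l] fun _ => (1 : ℝ) :=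
    isBigO_of_le l fun i => by
      rw [norm_one, Real.norm_of_nonneg (momentRatio_nonneg μ _)]
      exact momentRatio_le_one (hX i)
  exact (isLittleO_one_iff ℝ).1 (((hnum.pow 2).div hden).isLittleO.trans_isBigO hbdd)

end Moments

noncomputable def weightedIndicatorSum {Ω : Type*} (A : ℕ → Set Ω) (w : ℕ → ℝ)
    (F : Finset ℕ) : Ω → ℝ :=
  fun ω => ∑ i ∈ F, w i * (A i).indicator 1 ω

section WeightedIndicatorSum

variable {Ω : Type*} {A : ℕ → Set Ω} {w : ℕ → ℝ}

theorem weightedIndicatorSum_union {F G : Finset ℕ} (h : Disjoint F G) :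
    weightedIndicatorSum A w (F ∪ G) = weightedIndicatorSum A w F + weightedIndicatorSum A w G :=
  funext fun _ => sum_union h

theorem weightedIndicatorSum_sq (F : Finset ℕ) (ω : Ω) :
    weightedIndicatorSum A w F ω ^ 2 =
      ∑ i ∈ F, ∑ j ∈ F, w i * w j * (A i ∩ A j).indicator 1 ω := by
  rw [weightedIndicatorSum, sq, sum_mul_sum]
  refine sum_congr rfl fun i _ => sum_congr rfl fun j _ => ?_
  rw [Set.inter_indicator_one, Pi.mul_apply]
  ring

variable [MeasurableSpace Ω] {μ : Measure Ω} [IsFiniteMeasure μ]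

theorem memLp_weightedIndicatorSum (hA : ∀ n, MeasurableSet (A n)) (F : Finset ℕ) :
    MemLp (weightedIndicatorSum A w F) 2 μ :=
  memLp_finsetSum F fun i _ =>
    ((memLp_const (1 : ℝ)).indicator (hA i) : MemLp ((A i).indicator 1) 2 μ).const_mul (w i)

theorem integral_weightedIndicatorSum (hA : ∀ n, MeasurableSet (A n)) (F : Finset ℕ) :
    ∫ ω, weightedIndicatorSum A w F ω ∂μ = ∑ i ∈ F, w i * (μ (A i)).toReal := by
  unfold weightedIndicatorSum
  rw [integral_finsetSum]
  · simp only [integral_const_mul, integral_indicator_one (hA _), measureReal_def]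
  · exact fun i _ => ((integrable_const 1).indicator (hA i)).const_mul (w i)

theorem integral_weightedIndicatorSum_sq (hA : ∀ n, MeasurableSet (A n)) (F : Finset ℕ) :
    ∫ ω, weightedIndicatorSum A w F ω ^ 2 ∂μ =
      ∑ i ∈ F, ∑ j ∈ F, w i * w j * (μ (A i ∩ A j)).toReal := by
  have hint : ∀ i j, Integrable (fun ω => w i * w j * (A i ∩ A j).indicator 1 ω) μ := fun i j =>
    ((integrable_const 1).indicator ((hA i).inter (hA j))).const_mul _
  simp_rw [weightedIndicatorSum_sq]
  rw [integral_finsetSum _ fun i _ => integrable_finsetSum _ fun j _ => hint i j]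
  refine sum_congr rfl fun i _ => ?_
  rw [integral_finsetSum _ fun j _ => hint i j]
  simp only [integral_const_mul, integral_indicator_one ((hA _).inter (hA _)), measureReal_def]

theorem momentRatio_weightedIndicatorSum (hA : ∀ n, MeasurableSet (A n)) (F : Finset ℕ) :
    momentRatio μ (weightedIndicatorSum A w F) =
      (∑ k ∈ F, w k * (μ (A k)).toReal) ^ 2 /
        ∑ i ∈ F, ∑ j ∈ F, w i * w j * (μ (A i ∩ A j)).toReal := by
  rw [momentRatio, integral_weightedIndicatorSum hA, integral_weightedIndicatorSum_sq hA]

end WeightedIndicatorSum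

/-- If `∑_{n=1}^m w_n P(A_n) → ∞`, then for every `s ∈ ℕ` the limsup of the
Chung–Erdős-type ratio is unchanged when the sums start from index `s`
instead of index `1`. -/
theorem limsup_ratio_tail_invariant
    {Ω : Type*} [MeasurableSpace Ω] (μ : Measure Ω) [IsProbabilityMeasure μ]
    (A : ℕ → Set Ω) (hA : ∀ n, MeasurableSet (A n)) (w : ℕ → ℝ)
    (hdiv : Tendsto (fun m => ∑ n ∈ Finset.Icc 1 m, w n * (μ (A n)).toReal)
      atTop atTop) :
    ∀ s : ℕ, 1 ≤ s →
      limsup (fun n =>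
        (∑ k ∈ Finset.Icc 1 n, w k * (μ (A k)).toReal) ^ 2 /
          ∑ i ∈ Finset.Icc 1 n, ∑ j ∈ Finset.Icc 1 n,
            w i * w j * (μ (A i ∩ A j)).toReal) atTop =
      limsup (fun n =>
        (∑ k ∈ Finset.Icc s n, w k * (μ (A k)).toReal) ^ 2 /
          ∑ i ∈ Finset.Icc s n, ∑ j ∈ Finset.Icc s n,
            w i * w j * (μ (A i ∩ A j)).toReal) atTop := by
  intro s hs
  have hS : ∀ F, MemLp (weightedIndicatorSum A w F) 2 μ := memLp_weightedIndicatorSum hA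
  have hunion : ∀ n, s - 1 ≤ n → Icc 1 n = Icc 1 (s - 1) ∪ Icc s n := fun n hn => by
    ext k; simp only [mem_union, mem_Icc]; omega
  have hdisj : ∀ n, Disjoint (Icc 1 (s - 1)) (Icc s n) := fun n =>
    disjoint_left.2 fun k => by simp only [mem_Icc]; omega
  have hmean : Tendsto (fun n => ∫ ω, weightedIndicatorSum A w (Icc s n) ω ∂μ) atTop atTop := by
    refine (tendsto_atTop_add_const_right _ (-∑ k ∈ Icc 1 (s - 1), w k * (μ (A k)).toReal)
      hdiv).congr' ?_
    filter_upwards [eventually_ge_atTop (s - 1)] with n hn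
    rw [integral_weightedIndicatorSum hA, hunion n hn, sum_union (hdisj n)]
    ring
  simp only [← momentRatio_weightedIndicatorSum hA]
  refine limsup_eq_of_tendsto_sub ?_ ?_ ((tendsto_momentRatio_add_sub_momentRatio
    (hS (Icc 1 (s - 1))) (fun n => hS (Icc s n)) hmean).congr' ?_)
  · exact isBoundedUnder_of ⟨1, fun n => momentRatio_le_one (hS _)⟩
  · exact isBoundedUnder_of ⟨0, fun n => momentRatio_nonneg μ _⟩
  · filter_upwards [eventually_ge_atTop (s - 1)] with n hn
    rw [Pi.sub_apply, hunion n hn, weightedIndicatorSum_union (hdisj n)]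
end

section
/- Let (Ω, F, P) be a probability space, let {A_n}_{n=1}^∞ be a sequence of events, and let {w_n}_{n=1}^∞ be a bounded sequence of nonnegative real numbers with Σ_{n=1}^∞ w_n P(A_n) = ∞. Then P(limsup_n A_n) ≥ limsup_{n→∞} (Σ_{1≤i<j≤n} w_i w_j P(A_i) P(A_j)) / (Σ_{1≤i<j≤n} w_i w_j P(A_i ∩ A_j)). -/
/-!
Write `C m = ⋃_{k ≥ m} A k`, `S n = ∑_{k ≤ n} w k P(A k)`, and `N n`, `D n` for the numerator
and denominator of the ratio. Cauchy–Schwarz for `∑_{m < k ≤ n} w k 1_{A k}`, which vanishes off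
`C m`, gives the weighted Chung–Erdős inequality `(S n - S m)² ≤ Q P(C m)` with
`Q = ∑_{m < i, j ≤ n} w i w j P(A i ∩ A j)`. Since `2 N n ≤ (S n)²` and `Q ≤ M S n + 2 D n`
(for `w ≤ M` the diagonal terms satisfy `w i² P(A i) ≤ M w i P(A i)`), the ratio `N n / D n`
is at most `P(C m) (S n)² / ((S n - S m)² - P(C m) M S n)`, which tends to `P(C m)` as
`S n → ∞`.
Finally `P(C m) ↓ P(limsup A)`.
-/

open MeasureTheory Filter Finset
open scoped ENNReal Topology

section ChungErdos

variable {α : Type*} [MeasurableSpace α] {μ : Measure α}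

theorem sq_lintegral_le_lintegral_sq_mul_measure_s7 {f : α → ℝ≥0∞} (hf : AEMeasurable f μ)
    {s : Set α} (hs : MeasurableSet s) (hfs : f.support ⊆ s) :
    (∫⁻ x, f x ∂μ) ^ 2 ≤ (∫⁻ x, f x ^ 2 ∂μ) * μ s := by
  have holder := ENNReal.lintegral_mul_norm_pow_le (hf.pow_const 2)
    (aemeasurable_one.indicator hs) (p := 1 / 2) (q := 1 / 2) (by norm_num) (by norm_num)
    (by norm_num) (μ := μ)
  have hsqrt :
      ∀ x, (f x ^ 2) ^ (1 / 2 : ℝ) * s.indicator (fun _ => 1) x ^ (1 / 2 : ℝ) = f x := by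
    intro x
    by_cases hx : x ∈ s
    · rw [Set.indicator_of_mem hx, ENNReal.one_rpow, mul_one, show (1 / 2 : ℝ) = ((2 : ℕ) : ℝ)⁻¹ by
        norm_num, ENNReal.pow_rpow_inv_natCast two_ne_zero]
    · rw [Set.indicator_of_notMem hx, Function.notMem_support.mp (mt (@hfs x) hx)]
      simp
  simp only [hsqrt, lintegral_indicator_const hs, one_mul] at holder
  calc (∫⁻ x, f x ∂μ) ^ 2
      ≤ ((∫⁻ x, f x ^ 2 ∂μ) ^ (1 / 2 : ℝ) * μ s ^ (1 / 2 : ℝ)) ^ 2 := by gcongr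
    _ = (∫⁻ x, f x ^ 2 ∂μ) * μ s := by
      rw [mul_pow, ← ENNReal.rpow_two, ← ENNReal.rpow_two, ← ENNReal.rpow_mul,
        ← ENNReal.rpow_mul]
      norm_num

theorem sq_sum_mul_measure_le {ι : Type*} (s : Finset ι) (A : ι → Set α)
    (hA : ∀ i ∈ s, MeasurableSet (A i)) (c : ι → ℝ≥0∞) :
    (∑ i ∈ s, c i * μ (A i)) ^ 2 ≤
      (∑ i ∈ s, ∑ j ∈ s, c i * c j * μ (A i ∩ A j)) * μ (⋃ i ∈ s, A i) := by
  set g : α → ℝ≥0∞ := fun x => ∑ i ∈ s, (A i).indicator (fun _ => c i) x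
  have hg : Measurable g :=
    measurable_sum _ fun i hi => measurable_const.indicator (hA i hi)
  have hsupp : g.support ⊆ ⋃ i ∈ s, A i := by
    intro x hx
    obtain ⟨i, hi, hxi⟩ := exists_ne_zero_of_sum_ne_zero hx
    exact Set.mem_biUnion hi (Set.mem_of_indicator_ne_zero hxi)
  have hint : ∫⁻ x, g x ∂μ = ∑ i ∈ s, c i * μ (A i) := by
    rw [lintegral_finsetSum _ fun i hi => measurable_const.indicator (hA i hi)]
    exact sum_congr rfl fun i hi => lintegral_indicator_const (hA i hi) _
  have hint_sq : ∫⁻ x, g x ^ 2 ∂μ = ∑ i ∈ s, ∑ j ∈ s, c i * c j * μ (A i ∩ A j) := by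
    have hg_sq : ∀ x,
        g x ^ 2 = ∑ i ∈ s, ∑ j ∈ s, (A i ∩ A j).indicator (fun _ => c i * c j) x := fun x => by
      simp only [g, sq, sum_mul_sum, Set.inter_indicator_mul]
    simp only [hg_sq]
    rw [lintegral_finsetSum _ fun i hi => measurable_sum _ fun j hj =>
      measurable_const.indicator ((hA i hi).inter (hA j hj))]
    refine sum_congr rfl fun i hi => ?_
    rw [lintegral_finsetSum _ fun j hj =>
      measurable_const.indicator ((hA i hi).inter (hA j hj))]
    exact sum_congr rfl fun j hj =>
      lintegral_indicator_const ((hA i hi).inter (hA j hj)) _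
  rw [← hint, ← hint_sq]
  exact sq_lintegral_le_lintegral_sq_mul_measure_s7 hg.aemeasurable
    (measurableSet_biUnion s hA) hsupp

theorem sq_sum_mul_measureReal_le [IsFiniteMeasure μ] {ι : Type*} (s : Finset ι)
    (A : ι → Set α) (hA : ∀ i ∈ s, MeasurableSet (A i)) (c : ι → ℝ) (hc : ∀ i ∈ s, 0 ≤ c i) :
    (∑ i ∈ s, c i * μ.real (A i)) ^ 2 ≤
      (∑ i ∈ s, ∑ j ∈ s, c i * c j * μ.real (A i ∩ A j)) * μ.real (⋃ i ∈ s, A i) := by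
  have key := sq_sum_mul_measure_le (μ := μ) s A hA (fun i => ENNReal.ofReal (c i))
  have hc2 : ∀ i ∈ s, ∀ j ∈ s, 0 ≤ c i * c j * μ.real (A i ∩ A j) := fun i hi j hj => by
    have := hc i hi; have := hc j hj; positivity
  have hQ : 0 ≤ ∑ i ∈ s, ∑ j ∈ s, c i * c j * μ.real (A i ∩ A j) :=
    sum_nonneg fun i hi => sum_nonneg (hc2 i hi)
  rw [← ENNReal.ofReal_le_ofReal_iff (mul_nonneg hQ measureReal_nonneg), ENNReal.ofReal_mul hQ,
    ENNReal.ofReal_pow (sum_nonneg fun i hi => by have := hc i hi; positivity),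
    ENNReal.ofReal_sum_of_nonneg (fun i hi => by have := hc i hi; positivity),
    ENNReal.ofReal_sum_of_nonneg (fun i hi => sum_nonneg (hc2 i hi))]
  convert key using 3 with i hi i hi
  · rw [ENNReal.ofReal_mul (hc i hi), ofReal_measureReal (measure_ne_top μ _)]
  · rw [ENNReal.ofReal_sum_of_nonneg (hc2 i hi)]
    refine sum_congr rfl fun j hj => ?_
    rw [ENNReal.ofReal_mul (by have := hc i hi; have := hc j hj; positivity),
      ENNReal.ofReal_mul (hc i hi), ofReal_measureReal (measure_ne_top μ _)]
  · rw [ofReal_measureReal (measure_ne_top μ _)]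

end ChungErdos

theorem sum_Icc_sum_Icc_eq_sum_add_two_nsmul {β : Type*} [AddCommMonoid β] (f : ℕ → ℕ → β)
    (hf : ∀ i j, f i j = f j i) (a n : ℕ) :
    ∑ i ∈ Icc a n, ∑ j ∈ Icc a n, f i j =
      ∑ i ∈ Icc a n, f i i + 2 • ∑ i ∈ Icc a n, ∑ j ∈ Ioc i n, f i j := by
  have split : ∀ i ∈ Icc a n,
      ∑ j ∈ Icc a n, f i j = ∑ j ∈ Icc a i, f i j + ∑ j ∈ Ioc i n, f i j := by
    intro i hi
    rw [mem_Icc] at hi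
    rw [← sum_union (disjoint_left.2 fun j hj hj' => by
      simp only [mem_Icc, mem_Ioc] at hj hj'
      omega)]
    congr 1
    ext j
    simp only [mem_Icc, mem_Ioc, mem_union]
    omega
  have swap : ∑ i ∈ Icc a n, ∑ j ∈ Icc a i, f i j = ∑ j ∈ Icc a n, ∑ i ∈ Icc j n, f i j :=
    sum_comm' fun i j => by simp only [mem_Icc]; omega
  have diag : ∀ j ∈ Icc a n, ∑ i ∈ Icc j n, f i j = f j j + ∑ i ∈ Ioc j n, f j i := by
    intro j hj
    rw [Icc_eq_cons_Ioc (mem_Icc.1 hj).2, sum_cons]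
    exact congrArg _ (sum_congr rfl fun i _ => hf i j)
  rw [sum_congr rfl split, sum_add_distrib, swap, sum_congr rfl diag, sum_add_distrib, two_nsmul,
    add_assoc]

theorem two_mul_sum_sum_Ioc_le_sq (a : ℕ → ℝ) (m n : ℕ) :
    2 * ∑ i ∈ Icc m n, ∑ j ∈ Ioc i n, a i * a j ≤ (∑ i ∈ Icc m n, a i) ^ 2 := by
  have hdiag : 0 ≤ ∑ i ∈ Icc m n, a i * a i := sum_nonneg fun i _ => mul_self_nonneg _
  rw [sq, sum_mul_sum, sum_Icc_sum_Icc_eq_sum_add_two_nsmul _ (fun i j => mul_comm _ _),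
    nsmul_eq_mul, Nat.cast_ofNat]
  linarith

-- Here `t = S n`, `c = S m` and `P = P(C m)` in the notation of the header.
theorem div_le_mul_inv_of_sq_sub_le {N D Q P M t c : ℝ} (hN0 : 0 ≤ N) (hN : 2 * N ≤ t ^ 2)
    (hD : 0 ≤ D) (hQ : Q ≤ M * t + 2 * D) (hP : 0 ≤ P) (hPQ : (t - c) ^ 2 ≤ Q * P)
    (hpos : 0 < ((t - c) ^ 2 - P * M * t) / t ^ 2) :
    N / D ≤ P * (((t - c) ^ 2 - P * M * t) / t ^ 2)⁻¹ := by
  have hY : 0 < (t - c) ^ 2 - P * M * t :=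
    ((div_pos_iff.1 hpos).resolve_right fun h => (sq_nonneg t).not_gt h.2).1
  rw [inv_div, ← mul_div_assoc]
  rcases hD.eq_or_lt with rfl | hD
  · rw [div_zero]
    positivity
  rw [div_le_div_iff₀ hD hY]
  have hY_le : (t - c) ^ 2 - P * M * t ≤ P * (2 * D) := by nlinarith
  calc N * ((t - c) ^ 2 - P * M * t) ≤ N * (P * (2 * D)) := by gcongr
    _ = 2 * N * (P * D) := by ring
    _ ≤ t ^ 2 * (P * D) := by gcongr
    _ = P * t ^ 2 * D := by ring

theorem tendsto_sub_sq_sub_mul_div_sq_atTop (c K : ℝ) :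
    Tendsto (fun t => ((t - c) ^ 2 - K * t) / t ^ 2) atTop (𝓝 1) := by
  have hlim : Tendsto (fun t : ℝ => (1 - c * t⁻¹) ^ 2 - K * t⁻¹) atTop
      (𝓝 ((1 - c * 0) ^ 2 - K * 0)) :=
    ((tendsto_const_nhds.sub (tendsto_inv_atTop_zero.const_mul c)).pow 2).sub
      (tendsto_inv_atTop_zero.const_mul K)
  rw [mul_zero, mul_zero, sub_zero, sub_zero, one_pow] at hlim
  refine hlim.congr' ?_
  filter_upwards [eventually_ne_atTop 0] with t ht
  field_simp

section Events

variable {Ω : Type*} [MeasurableSpace Ω] {μ : Measure Ω} {A : ℕ → Set Ω} {w : ℕ → ℝ}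

theorem sum_Ioc_sum_Ioc_mul_measureReal_inter_le (hw0 : ∀ n, 0 ≤ w n) {M : ℝ}
    (hM : ∀ n, w n ≤ M) (m n : ℕ) :
    ∑ i ∈ Ioc m n, ∑ j ∈ Ioc m n, w i * w j * μ.real (A i ∩ A j) ≤
      M * ∑ k ∈ Icc 1 n, w k * μ.real (A k) +
        2 * ∑ i ∈ Icc 1 n, ∑ j ∈ Ioc i n, w i * w j * μ.real (A i ∩ A j) := by
  have hsub : Ioc m n ⊆ Icc 1 n := fun k hk => by
    simp only [mem_Ioc, mem_Icc] at hk ⊢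
    omega
  have hnonneg : ∀ i j, 0 ≤ w i * w j * μ.real (A i ∩ A j) := fun i j => by
    have := hw0 i; have := hw0 j; positivity
  have hdiag : ∑ i ∈ Icc 1 n, w i * w i * μ.real (A i ∩ A i) ≤
      M * ∑ k ∈ Icc 1 n, w k * μ.real (A k) := by
    rw [mul_sum]
    refine sum_le_sum fun i _ => ?_
    rw [Set.inter_self, mul_assoc]
    exact mul_le_mul_of_nonneg_right (hM i) (mul_nonneg (hw0 i) measureReal_nonneg)
  calc _ ≤ ∑ i ∈ Icc 1 n, ∑ j ∈ Icc 1 n, w i * w j * μ.real (A i ∩ A j) :=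
        (sum_le_sum fun i _ => sum_le_sum_of_subset_of_nonneg hsub fun j _ _ => hnonneg i j).trans
          (sum_le_sum_of_subset_of_nonneg hsub fun i _ _ => sum_nonneg fun j _ => hnonneg i j)
    _ = _ := sum_Icc_sum_Icc_eq_sum_add_two_nsmul _
        (fun i j => by rw [Set.inter_comm, mul_comm (w i)]) 1 n
    _ ≤ _ := by
      rw [nsmul_eq_mul, Nat.cast_ofNat]
      linarith

variable [IsFiniteMeasure μ]

theorem tendsto_measureReal_iUnion_ge_limsup (hA : ∀ n, MeasurableSet (A n)) :
    Tendsto (fun m => μ.real (⋃ k ≥ m, A k)) atTop (𝓝 (μ.real (limsup A atTop))) := by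
  have hanti : Antitone fun m => ⋃ k ≥ m, A k := fun a b hab =>
    Set.biUnion_subset_biUnion_left fun k (hk : b ≤ k) => hab.trans hk
  rw [limsup_eq_iInf_iSup_of_nat]
  refine (ENNReal.tendsto_toReal (measure_ne_top μ _)).comp ?_
  exact tendsto_measure_iInter_atTop (fun m => (MeasurableSet.biUnion (Set.to_countable _)
    fun k _ => hA k).nullMeasurableSet) hanti ⟨0, measure_ne_top μ _⟩

theorem limsup_div_le_measureReal_iUnion_ge (hA : ∀ n, MeasurableSet (A n))
    (hw0 : ∀ n, 0 ≤ w n) {M : ℝ} (hM : ∀ n, w n ≤ M)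
    (hdiv : Tendsto (fun n => ∑ k ∈ Icc 1 n, w k * μ.real (A k)) atTop atTop) (m : ℕ) :
    limsup (fun n =>
        (∑ i ∈ Icc 1 n, ∑ j ∈ Ioc i n, w i * w j * (μ.real (A i) * μ.real (A j))) /
          ∑ i ∈ Icc 1 n, ∑ j ∈ Ioc i n, w i * w j * μ.real (A i ∩ A j)) atTop ≤
      μ.real (⋃ k ≥ m, A k) := by
  set S := fun n => ∑ k ∈ Icc 1 n, w k * μ.real (A k)
  set P := μ.real (⋃ k ≥ m, A k)
  have hY : Tendsto (fun n => ((S n - S m) ^ 2 - P * M * S n) / S n ^ 2) atTop (𝓝 1) :=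
    (tendsto_sub_sq_sub_mul_div_sq_atTop _ _).comp hdiv
  have hlim :
      Tendsto (fun n => P * (((S n - S m) ^ 2 - P * M * S n) / S n ^ 2)⁻¹) atTop (𝓝 P) := by
    simpa using (hY.inv₀ one_ne_zero).const_mul P
  have htail : ∀ n ≥ m, (S n - S m) ^ 2 ≤
      (∑ i ∈ Ioc m n, ∑ j ∈ Ioc m n, w i * w j * μ.real (A i ∩ A j)) * P := by
    intro n hmn
    have hS : S n - S m = ∑ k ∈ Ioc m n, w k * μ.real (A k) := by
      simp only [S, show ∀ k : ℕ, Icc 1 k = Ioc 0 k from fun k => Icc_add_one_left_eq_Ioc 0 k]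
      rw [← sum_Ioc_consecutive _ (Nat.zero_le m) hmn]
      ring
    rw [hS]
    refine (sq_sum_mul_measureReal_le _ A (fun k _ => hA k) w (fun k _ => hw0 k)).trans ?_
    have hQ : 0 ≤ ∑ i ∈ Ioc m n, ∑ j ∈ Ioc m n, w i * w j * μ.real (A i ∩ A j) :=
      sum_nonneg fun i _ => sum_nonneg fun j _ => by have := hw0 i; have := hw0 j; positivity
    refine mul_le_mul_of_nonneg_left (measureReal_mono ?_ (measure_ne_top μ _)) hQ
    exact Set.iUnion₂_subset fun k hk => Set.subset_biUnion_of_mem (u := A) (mem_Ioc.1 hk).1.le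
  have hw2 : ∀ i j, 0 ≤ w i * w j := fun i j => mul_nonneg (hw0 i) (hw0 j)
  have hN0 :
      ∀ n, 0 ≤ ∑ i ∈ Icc 1 n, ∑ j ∈ Ioc i n, w i * w j * (μ.real (A i) * μ.real (A j)) :=
    fun n => sum_nonneg fun i _ => sum_nonneg fun j _ => by have := hw2 i j; positivity
  have hD0 : ∀ n, 0 ≤ ∑ i ∈ Icc 1 n, ∑ j ∈ Ioc i n, w i * w j * μ.real (A i ∩ A j) :=
    fun n => sum_nonneg fun i _ => sum_nonneg fun j _ => by have := hw2 i j; positivity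
  refine (limsup_le_limsup ?_ (isCoboundedUnder_le_of_le atTop fun n =>
    div_nonneg (hN0 n) (hD0 n)) hlim.isBoundedUnder_le).trans hlim.limsup_eq.le
  filter_upwards [hY.eventually (lt_mem_nhds one_pos), eventually_ge_atTop m] with n hpos hmn
  refine div_le_mul_inv_of_sq_sub_le (hN0 n) ?_ (hD0 n)
    (sum_Ioc_sum_Ioc_mul_measureReal_inter_le hw0 hM m n) measureReal_nonneg (htail n hmn) hpos
  simpa only [mul_mul_mul_comm] using two_mul_sum_sum_Ioc_le_sq (fun k => w k * μ.real (A k)) 1 n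

end Events

/-- For a bounded sequence of nonnegative weights `w_n` with
`∑ w_n P(A_n) = ∞`, one has
`P(limsup A_n) ≥ limsup_n (∑_{i<j≤n} w_i w_j P(A_i) P(A_j)) / (∑_{i<j≤n} w_i w_j P(A_i ∩ A_j))`. -/
theorem borel_cantelli_offdiagonal
    {Ω : Type*} [MeasurableSpace Ω] (μ : Measure Ω) [IsProbabilityMeasure μ]
    (A : ℕ → Set Ω) (hA : ∀ n, MeasurableSet (A n)) (w : ℕ → ℝ)
    (hw0 : ∀ n, 0 ≤ w n) (hwbdd : ∃ M : ℝ, ∀ n, w n ≤ M)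
    (hdiv : Tendsto (fun m => ∑ n ∈ Finset.Icc 1 m, w n * (μ (A n)).toReal)
      atTop atTop) :
    (μ (limsup A atTop)).toReal ≥
      limsup (fun n =>
        (∑ i ∈ Finset.Icc 1 n, ∑ j ∈ Finset.Ioc i n,
            w i * w j * ((μ (A i)).toReal * (μ (A j)).toReal)) /
          ∑ i ∈ Finset.Icc 1 n, ∑ j ∈ Finset.Ioc i n,
            w i * w j * (μ (A i ∩ A j)).toReal) atTop := by
  obtain ⟨M, hM⟩ := hwbdd
  exact ge_of_tendsto' (tendsto_measureReal_iUnion_ge_limsup hA)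
    (limsup_div_le_measureReal_iUnion_ge hA hw0 hM hdiv)
end

section
/- Let (Ω, F, P) be a probability space, let {A_n}_{n=1}^∞ be a sequence of events, and let {w_n}_{n=1}^∞ be a bounded sequence of nonnegative real numbers with Σ_{n=1}^∞ w_n P(A_n) = ∞. Then lim_{n→∞} (Σ_{i=1}^n w_i² P(A_i)) / (Σ_{i=1}^n Σ_{j=1}^n w_i w_j P(A_i ∩ A_j)) = 0. -/
open MeasureTheory Filter Finset

/-! Write `S n = ∑ w_i P(A_i)` and `M` for a bound of the weights. The diagonal sum is at most
`M S n`, while the double sum is `𝔼 X²` for `X = ∑ w_i 𝟙_{A_i}`, hence at least `(𝔼 X)² = S n²`.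
The ratio is therefore at most `M / S n → 0`. -/

section

variable {Ω ι : Type*} [MeasurableSpace Ω] {μ : Measure Ω}

lemma integral_sum_indicator_const [IsFiniteMeasure μ] (s : Finset ι) {B : ι → Set Ω}
    (hB : ∀ i, MeasurableSet (B i)) (c : ι → ℝ) :
    ∫ ω, ∑ i ∈ s, (B i).indicator (fun _ => c i) ω ∂μ = ∑ i ∈ s, c i * μ.real (B i) := by
  rw [integral_finsetSum _ fun i _ => (integrable_const (c i)).indicator (hB i)]
  simp only [integral_indicator_const _ (hB _), smul_eq_mul, mul_comm]

lemma sq_sum_mul_measureReal_le_sum_sum_mul_measureReal_inter [IsProbabilityMeasure μ]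
    (s : Finset ι) {A : ι → Set Ω} (hA : ∀ i, MeasurableSet (A i)) (w : ι → ℝ) :
    (∑ i ∈ s, w i * μ.real (A i)) ^ 2 ≤
      ∑ i ∈ s, ∑ j ∈ s, w i * w j * μ.real (A i ∩ A j) := by
  set X : Ω → ℝ := fun ω => ∑ i ∈ s, (A i).indicator (fun _ => w i) ω
  have hX : MemLp X 2 μ :=
    memLp_finsetSum _ fun i _ => memLp_indicator_const 2 (hA i) (w i) (.inr (measure_ne_top μ _))
  have hX_sq : (fun ω => X ω ^ 2) =
      fun ω => ∑ p ∈ s ×ˢ s, (A p.1 ∩ A p.2).indicator (fun _ => w p.1 * w p.2) ω := by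
    ext ω
    simp only [X, sq, sum_mul_sum, sum_product, Set.inter_indicator_mul]
  have hmean := integral_sum_indicator_const (μ := μ) s hA w
  have hsq := integral_sum_indicator_const (μ := μ) (s ×ˢ s)
    (fun p => (hA p.1).inter (hA p.2)) fun p => w p.1 * w p.2
  have h := ProbabilityTheory.variance_nonneg X μ
  rw [ProbabilityTheory.variance_eq_sub hX, sub_nonneg] at h
  simp only [Pi.pow_apply, hX_sq] at h
  rwa [hsq, sum_product, hmean] at h

end

lemma tendsto_div_zero_of_le_mul_of_sq_le {α : Type*} {l : Filter α} {N D S : α → ℝ} {M : ℝ}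
    (hN₀ : ∀ᶠ x in l, 0 ≤ N x) (hN : ∀ᶠ x in l, N x ≤ M * S x)
    (hD : ∀ᶠ x in l, S x ^ 2 ≤ D x) (hS : Tendsto S l atTop) :
    Tendsto (fun x => N x / D x) l (nhds 0) := by
  have hS₀ : ∀ᶠ x in l, 0 < S x := hS.eventually_gt_atTop 0
  refine squeeze_zero' ?_ ?_ (tendsto_const_nhds.div_atTop hS : Tendsto (fun x => M / S x) l _)
  · filter_upwards [hN₀, hD] with x hNx hDx
    exact div_nonneg hNx ((sq_nonneg _).trans hDx)
  · filter_upwards [hN₀, hN, hD, hS₀] with x hN₀x hNx hDx hSx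
    calc N x / D x ≤ N x / S x ^ 2 := div_le_div_of_nonneg_left hN₀x (by positivity) hDx
      _ ≤ M * S x / S x ^ 2 := by gcongr
      _ = M / S x := by field_simp

/-- For a bounded sequence of nonnegative weights `w_n` with
`∑ w_n P(A_n) = ∞`, the ratio of the diagonal term `∑_{i=1}^n w_i² P(A_i)` to
the full double sum `∑_{i,j=1}^n w_i w_j P(A_i ∩ A_j)` tends to `0`. -/
theorem diagonal_ratio_tendsto_zero
    {Ω : Type*} [MeasurableSpace Ω] (μ : Measure Ω) [IsProbabilityMeasure μ]
    (A : ℕ → Set Ω) (hA : ∀ n, MeasurableSet (A n)) (w : ℕ → ℝ)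
    (hw0 : ∀ n, 0 ≤ w n) (hwbdd : ∃ M : ℝ, ∀ n, w n ≤ M)
    (hdiv : Tendsto (fun m => ∑ n ∈ Finset.Icc 1 m, w n * (μ (A n)).toReal)
      atTop atTop) :
    Tendsto (fun n =>
      (∑ i ∈ Finset.Icc 1 n, w i ^ 2 * (μ (A i)).toReal) /
        ∑ i ∈ Finset.Icc 1 n, ∑ j ∈ Finset.Icc 1 n,
          w i * w j * (μ (A i ∩ A j)).toReal) atTop (nhds 0) := by
  obtain ⟨M, hM⟩ := hwbdd
  simp only [← measureReal_def] at hdiv ⊢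
  refine tendsto_div_zero_of_le_mul_of_sq_le (M := M) (.of_forall fun n => ?_)
    (.of_forall fun n => ?_)
    (.of_forall fun n => sq_sum_mul_measureReal_le_sum_sum_mul_measureReal_inter _ hA w) hdiv
  · positivity
  · rw [mul_sum]
    refine sum_le_sum fun i _ => ?_
    rw [sq, mul_assoc]
    exact mul_le_mul_of_nonneg_right (hM i) (mul_nonneg (hw0 i) measureReal_nonneg)
end

section
/- Let (Ω, F, P) be a probability space and let {A_n}_{n=1}^∞ be a sequence of events with Σ_{n=1}^∞ P(A_n) = ∞. Then P(limsup_n A_n) ≥ limsup_{n→∞} (Σ_{k=1}^n P(A_k))² / (Σ_{i=1}^n Σ_{j=1}^n P(A_i ∩ A_j)). (The Erdős–Rényi theorem, the case w_n ≡ 1 of the weighted generalization.) -/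
open MeasureTheory Filter Finset
open scoped ENNReal Topology

/-!
For `m ≤ n`, Cauchy–Schwarz applied to `N = ∑_{m < k ≤ n} 1_{A k}` and the indicator of
`⋃_{k ≥ m} A k`, on which `N` lives, gives `(s n - s m)² ≤ q n · P(⋃_{k ≥ m} A k)`, where
`s n = ∑_{k ≤ n} P(A k)` and `q n = ∑_{i, j ≤ n} P(A i ∩ A j)`. Since `s n → ∞`, the shift by
`s m` is negligible, so `limsup s n² / q n ≤ P(⋃_{k ≥ m} A k)` for every `m`; these tail
probabilities decrease to `P(limsup A)`.
-/

namespace MeasureTheory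

variable {Ω ι : Type*} [MeasurableSpace Ω] (μ : Measure Ω)

lemma sq_lintegral_le_lintegral_sq_mul_measure {f : Ω → ℝ≥0∞} (hf : AEMeasurable f μ)
    {U : Set Ω} (hU : MeasurableSet U) (hfU : ∀ ω ∉ U, f ω = 0) :
    (∫⁻ ω, f ω ∂μ) ^ 2 ≤ (∫⁻ ω, f ω ^ 2 ∂μ) * μ U := by
  have hfU' : ∀ ω, f ω * U.indicator 1 ω = f ω := fun ω => by
    by_cases hω : ω ∈ U <;> simp [hω, hfU]
  have hU_sq : ∫⁻ ω, U.indicator 1 ω ^ 2 ∂μ = μ U := by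
    rw [← lintegral_indicator_one hU]
    congr with ω
    by_cases hω : ω ∈ U <;> simp [hω]
  have holder := ENNReal.lintegral_mul_le_Lp_mul_Lq μ .two_two hf
    (g := U.indicator 1) (aemeasurable_one.indicator hU)
  simp only [Pi.mul_apply, hfU', hU_sq, ENNReal.rpow_two] at holder
  calc (∫⁻ ω, f ω ∂μ) ^ 2
      ≤ ((∫⁻ ω, f ω ^ 2 ∂μ) ^ (1 / 2 : ℝ) * μ U ^ (1 / 2 : ℝ)) ^ 2 := by gcongr
    _ = (∫⁻ ω, f ω ^ 2 ∂μ) * μ U := by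
      rw [mul_pow, ← ENNReal.rpow_natCast, ← ENNReal.rpow_natCast (μ U ^ _),
        ← ENNReal.rpow_mul, ← ENNReal.rpow_mul]
      norm_num

lemma lintegral_sum_indicator_one {A : ι → Set Ω} (hA : ∀ k, MeasurableSet (A k))
    (s : Finset ι) : ∫⁻ ω, ∑ k ∈ s, (A k).indicator 1 ω ∂μ = ∑ k ∈ s, μ (A k) := by
  rw [lintegral_finsetSum _ fun k _ => measurable_one.indicator (hA k)]
  exact sum_congr rfl fun k _ => lintegral_indicator_one (hA k)

/-- The second-moment inequality `(E N)² ≤ E N² · P(N > 0)` for the counting variable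
`N = ∑_{k ∈ s} 1_{A k}`. -/
lemma sq_sum_measure_le_sum_sum_measure_inter_mul {A : ι → Set Ω}
    (hA : ∀ k, MeasurableSet (A k)) (s : Finset ι) :
    (∑ k ∈ s, μ (A k)) ^ 2 ≤
      (∑ i ∈ s, ∑ j ∈ s, μ (A i ∩ A j)) * μ (⋃ k ∈ s, A k) := by
  have hN : Measurable fun ω => ∑ k ∈ s, (A k).indicator (1 : Ω → ℝ≥0∞) ω :=
    Finset.measurable_sum _ fun k _ => measurable_one.indicator (hA k)
  have hN_sq : ∀ ω, (∑ k ∈ s, (A k).indicator (1 : Ω → ℝ≥0∞) ω) ^ 2 =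
      ∑ i ∈ s, ∑ j ∈ s, (A i ∩ A j).indicator 1 ω := fun ω => by
    simp only [sq, sum_mul_sum, Set.inter_indicator_one, Pi.mul_apply]
  have hN_support : ∀ ω ∉ ⋃ k ∈ s, A k, ∑ k ∈ s, (A k).indicator (1 : Ω → ℝ≥0∞) ω = 0 := by
    intro ω hω
    simp only [Set.mem_iUnion, not_exists] at hω
    exact sum_eq_zero fun k hk => Set.indicator_of_notMem (hω k hk) _
  have key := sq_lintegral_le_lintegral_sq_mul_measure μ hN.aemeasurable
    (.biUnion s.countable_toSet fun k _ => hA k) hN_support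
  simp only [hN_sq] at key
  rwa [lintegral_sum_indicator_one μ hA, lintegral_finsetSum _ fun i _ =>
    Finset.measurable_sum _ fun j _ => measurable_one.indicator ((hA i).inter (hA j)),
    sum_congr rfl fun i _ => lintegral_sum_indicator_one μ (fun j => (hA i).inter (hA j)) s]
    at key

lemma sq_sum_measureReal_le_of_subset [IsFiniteMeasure μ] {A : ι → Set Ω}
    (hA : ∀ k, MeasurableSet (A k)) {s t : Finset ι} (hts : t ⊆ s) {U : Set Ω}
    (hU : ⋃ k ∈ t, A k ⊆ U) :
    (∑ k ∈ t, μ.real (A k)) ^ 2 ≤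
      (∑ i ∈ s, ∑ j ∈ s, μ.real (A i ∩ A j)) * μ.real U := by
  have key : (∑ k ∈ t, μ (A k)) ^ 2 ≤ (∑ i ∈ s, ∑ j ∈ s, μ (A i ∩ A j)) * μ U :=
    calc (∑ k ∈ t, μ (A k)) ^ 2
        ≤ (∑ i ∈ t, ∑ j ∈ t, μ (A i ∩ A j)) * μ (⋃ k ∈ t, A k) :=
          sq_sum_measure_le_sum_sum_measure_inter_mul μ hA t
      _ ≤ (∑ i ∈ s, ∑ j ∈ s, μ (A i ∩ A j)) * μ U := by
          gcongr ?_ * ?_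
          · exact (sum_le_sum_of_subset hts).trans
              (sum_le_sum fun i _ => sum_le_sum_of_subset hts)
          · exact measure_mono hU
  have hfin := ENNReal.toReal_mono (ENNReal.mul_ne_top (ENNReal.sum_ne_top.2 fun i _ =>
    ENNReal.sum_ne_top.2 fun j _ => measure_ne_top μ _) (measure_ne_top μ U)) key
  simpa [measureReal_def, ENNReal.toReal_sum] using hfin

lemma tendsto_measure_biUnion_ge_limsup [IsFiniteMeasure μ] {A : ℕ → Set Ω}
    (hA : ∀ k, NullMeasurableSet (A k) μ) :
    Tendsto (fun m => μ (⋃ k ≥ m, A k)) atTop (𝓝 (μ (limsup A atTop))) := by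
  rw [limsup_eq_iInf_iSup_of_nat]
  simp only [Set.iSup_eq_iUnion, Set.iInf_eq_iInter]
  exact tendsto_measure_iInter_atTop (fun m => .biUnion (Set.to_countable _) fun k _ => hA k)
    (fun m n hmn => Set.biUnion_mono (fun k hk => le_trans hmn hk) fun _ _ => le_rfl)
    ⟨0, measure_ne_top μ _⟩

end MeasureTheory

lemma limsup_sq_div_le_of_sq_sub_le {s q : ℕ → ℝ} {c t : ℝ} (hs : Tendsto s atTop atTop)
    (hq : ∀ n, 0 ≤ q n) (h : ∀ᶠ n in atTop, (s n - c) ^ 2 ≤ q n * t) :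
    limsup (fun n => s n ^ 2 / q n) atTop ≤ t := by
  have hlim : Tendsto (fun n => t / (1 - c / s n) ^ 2) atTop (𝓝 t) := by
    have hc : Tendsto (fun n => c / s n) atTop (𝓝 0) := tendsto_const_nhds.div_atTop hs
    have := Filter.Tendsto.div (tendsto_const_nhds (x := t))
      ((tendsto_const_nhds (x := (1 : ℝ))).sub hc |>.pow 2) (by norm_num)
    rwa [sub_zero, one_pow, div_one] at this
  have hle : ∀ᶠ n in atTop, s n ^ 2 / q n ≤ t / (1 - c / s n) ^ 2 := by
    filter_upwards [h, hs.eventually_gt_atTop (max c 0)] with n hn hsn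
    have hsc : 0 < s n - c := by linarith [le_max_left c 0]
    have hs0 : 0 < s n := by linarith [le_max_right c 0]
    have hqt : 0 < q n * t := (pow_pos hsc 2).trans_le hn
    have hq0 : 0 < q n := lt_of_le_of_ne (hq n) fun h0 => by simp [← h0] at hqt
    have h1 : 0 < 1 - c / s n := by rw [sub_pos, div_lt_one hs0]; linarith
    rw [div_le_div_iff₀ hq0 (by positivity)]
    calc s n ^ 2 * (1 - c / s n) ^ 2 = (s n - c) ^ 2 := by field_simp
      _ ≤ t * q n := by linarith
  calc limsup (fun n => s n ^ 2 / q n) atTop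
      ≤ limsup (fun n => t / (1 - c / s n) ^ 2) atTop :=
        limsup_le_limsup hle
          (isBoundedUnder_of ⟨0, fun n => div_nonneg (sq_nonneg _) (hq n)⟩).isCoboundedUnder_le
          hlim.isBoundedUnder_le
    _ = t := hlim.limsup_eq

/-- **Erdős–Rényi theorem.** If `∑ P(A_n) = ∞`, then
`P(limsup A_n) ≥ limsup_n (∑_{k=1}^n P(A_k))² / (∑_{i,j=1}^n P(A_i ∩ A_j))`. -/
theorem erdos_renyi_borel_cantelli
    {Ω : Type*} [MeasurableSpace Ω] (μ : Measure Ω) [IsProbabilityMeasure μ]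
    (A : ℕ → Set Ω) (hA : ∀ n, MeasurableSet (A n))
    (hdiv : Tendsto (fun m => ∑ n ∈ Finset.Icc 1 m, (μ (A n)).toReal)
      atTop atTop) :
    (μ (limsup A atTop)).toReal ≥
      limsup (fun n =>
        (∑ k ∈ Finset.Icc 1 n, (μ (A k)).toReal) ^ 2 /
          ∑ i ∈ Finset.Icc 1 n, ∑ j ∈ Finset.Icc 1 n,
            (μ (A i ∩ A j)).toReal) atTop := by
  have htail : ∀ m, limsup (fun n =>
      (∑ k ∈ Icc 1 n, μ.real (A k)) ^ 2 / ∑ i ∈ Icc 1 n, ∑ j ∈ Icc 1 n, μ.real (A i ∩ A j))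
        atTop ≤ μ.real (⋃ k ≥ m, A k) := by
    intro m
    refine limsup_sq_div_le_of_sq_sub_le (c := ∑ k ∈ Icc 1 m, μ.real (A k)) hdiv
      (fun n => by positivity) ?_
    filter_upwards [eventually_ge_atTop m] with n hmn
    -- `Icc 1 m` and `Ioc 0 m` are definitionally equal in `ℕ`.
    have hsplit : ∑ k ∈ Icc 1 m, μ.real (A k) + ∑ k ∈ Ioc m n, μ.real (A k) =
        ∑ k ∈ Icc 1 n, μ.real (A k) := sum_Ioc_consecutive _ (Nat.zero_le m) hmn
    rw [← hsplit, add_sub_cancel_left]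
    exact sq_sum_measureReal_le_of_subset μ hA (Ioc_subset_Ioc_left (Nat.zero_le m))
      (Set.biUnion_subset_biUnion_left fun k hk => (mem_Ioc.1 hk).1.le)
  exact ge_of_tendsto ((ENNReal.tendsto_toReal (measure_ne_top μ _)).comp
    (tendsto_measure_biUnion_ge_limsup μ fun k => (hA k).nullMeasurableSet)) (.of_forall htail)
end
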